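/- arXiv:1412.3035 — 3 statements merged into one kernel-verified Lean document; each statement's English description precedes it below -/
import Mathlib

section
/- Let f, h be polynomials (over a field with valuation) in n variables, and let g = f·h. Then trop(g)(y) = trop(f)(y) + trop(h)(y) for all y, where trop(p)(y) = min over exponents ν of p of (val(a_ν) + y·ν). Consequently, if the minimum defining trop(f)(y) is attained at least twice, then the minimum defining trop(g)(y) is attained at least twice; hence Trop(f) ⊆ Trop(g). -/
open MvPolynomial

/-- The tropical polynomial of `p = ∑ a_ν x^ν`: `y ↦ min_{ν ∈ supp p} (val(a_ν) + y·ν)`. -/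
noncomputable def trop {K : Type*} [Field K] {n : ℕ}
    (v : AddValuation K (WithTop ℝ)) (p : MvPolynomial (Fin n) K) (y : Fin n → ℝ) :
    WithTop ℝ :=
  p.support.inf fun ν => v (p.coeff ν) + ((∑ i, y i * (ν i : ℝ) : ℝ) : WithTop ℝ)

/-- The tropical hypersurface of `p`: the locus where the minimum is attained at least
twice. -/
noncomputable def tropSet {K : Type*} [Field K] {n : ℕ}
    (v : AddValuation K (WithTop ℝ)) (p : MvPolynomial (Fin n) K) : Set (Fin n → ℝ) :=
  { y | ∃ ν ∈ p.support, ∃ η ∈ p.support, ν ≠ η ∧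
      v (p.coeff ν) + ((∑ i, y i * (ν i : ℝ) : ℝ) : WithTop ℝ) = trop v p y ∧
      v (p.coeff η) + ((∑ i, y i * (η i : ℝ) : ℝ) : WithTop ℝ) = trop v p y }

/-! The lower bound `trop f + trop h ≤ trop (f * h)` is the ultrametric inequality applied to
each coefficient of `f * h`. For equality, take the lexicographically smallest exponents `a`, `b`
attaining the minima for `f` and `h`: `(a, b)` is then the only pair of minimizers with sum
`a + b`, so the term `f_a h_b` strictly dominates the coefficient of `x^(a+b)` in `f * h`, and
the minimum is attained at `a + b`. The lexicographically largest minimizers give a second such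
exponent, different from the first as soon as the minimum for `f` is attained twice. -/

namespace AddValuation

variable {R Γ ι : Type*} [Ring R] [AddCommGroup Γ] [LinearOrder Γ] [IsOrderedAddMonoid Γ]
  (v : AddValuation R (WithTop Γ)) {s : Finset ι} {F : ι → R}

theorem le_map_sum_add_coe {g : WithTop Γ} (c : Γ) (hF : ∀ i ∈ s, g ≤ v (F i) + c) :
    g ≤ v (∑ i ∈ s, F i) + c := by
  have hc : (c : WithTop Γ) ≠ ⊤ := WithTop.coe_ne_top
  rw [← LinearOrderedAddCommGroupWithTop.neg_add_cancel_right_of_ne_top hc g]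
  refine add_le_add_left (v.map_le_sum fun i hi => ?_) _
  rw [← LinearOrderedAddCommGroupWithTop.add_neg_cancel_right_of_ne_top hc (v (F i))]
  exact add_le_add_left (hF i hi) _

theorem map_sum_eq_of_lt [DecidableEq ι] {j : ι} (hj : j ∈ s)
    (hF : ∀ i ∈ s \ {j}, v (F j) < v (F i)) : v (∑ i ∈ s, F i) = v (F j) :=
  Valuation.map_sum_eq_of_lt v hj hF

end AddValuation

section Tropicalization

open Finset.HasAntidiagonal

variable {K : Type*} [Field K] {n : ℕ} (v : AddValuation K (WithTop ℝ))

noncomputable def tropTerm (p : MvPolynomial (Fin n) K) (y : Fin n → ℝ) (ν : Fin n →₀ ℕ) :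
    WithTop ℝ :=
  v (p.coeff ν) + ((∑ i, y i * (ν i : ℝ) : ℝ) : WithTop ℝ)

noncomputable def tropArgmin (p : MvPolynomial (Fin n) K) (y : Fin n → ℝ) :
    Finset (Fin n →₀ ℕ) :=
  p.support.filter fun ν => tropTerm v p y ν = trop v p y

variable {v} {p f h : MvPolynomial (Fin n) K} {y : Fin n → ℝ} {ν : Fin n →₀ ℕ}

theorem trop_le_tropTerm (ν : Fin n →₀ ℕ) : trop v p y ≤ tropTerm v p y ν := by
  by_cases hν : ν ∈ p.support
  · exact Finset.inf_le hν
  · simp [tropTerm, notMem_support_iff.mp hν]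

theorem tropTerm_ne_top (hν : ν ∈ p.support) : tropTerm v p y ν ≠ ⊤ :=
  WithTop.add_ne_top.mpr ⟨v.ne_top_iff.mpr (mem_support_iff.mp hν), WithTop.coe_ne_top⟩

theorem trop_ne_top (hp : p ≠ 0) : trop v p y ≠ ⊤ :=
  let ⟨_, hν⟩ := support_nonempty.mpr hp
  ne_top_of_le_ne_top (tropTerm_ne_top hν) (trop_le_tropTerm _)

theorem mem_tropArgmin : ν ∈ tropArgmin v p y ↔ ν ∈ p.support ∧ tropTerm v p y ν = trop v p y :=
  Finset.mem_filter

theorem mem_tropArgmin_of_tropTerm_eq (htop : trop v p y ≠ ⊤) (hν : tropTerm v p y ν = trop v p y) :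
    ν ∈ tropArgmin v p y := by
  refine mem_tropArgmin.mpr ⟨mem_support_iff.mpr fun h0 => htop ?_, hν⟩
  rw [← hν, tropTerm, h0, v.map_zero, WithTop.top_add]

theorem tropArgmin_nonempty (v : AddValuation K (WithTop ℝ)) (hp : p ≠ 0) (y : Fin n → ℝ) :
    (tropArgmin v p y).Nonempty := by
  obtain ⟨ν, hν, hmin⟩ := Finset.exists_mem_eq_inf p.support (support_nonempty.mpr hp)
    (tropTerm v p y)
  exact ⟨ν, mem_tropArgmin.mpr ⟨hν, hmin.symm⟩⟩

theorem trop_lt_tropTerm_of_notMem (htop : trop v p y ≠ ⊤) (hν : ν ∉ tropArgmin v p y) :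
    trop v p y < tropTerm v p y ν :=
  (trop_le_tropTerm ν).lt_of_ne fun h => hν (mem_tropArgmin_of_tropTerm_eq htop h.symm)

theorem mem_tropSet_iff :
    y ∈ tropSet v p ↔ ∃ ν ∈ tropArgmin v p y, ∃ η ∈ tropArgmin v p y, ν ≠ η := by
  simp only [mem_tropArgmin]
  constructor
  · rintro ⟨ν, hν, η, hη, hne, hνmin, hηmin⟩
    exact ⟨ν, ⟨hν, hνmin⟩, η, ⟨hη, hηmin⟩, hne⟩
  · rintro ⟨ν, ⟨hν, hνmin⟩, η, ⟨hη, hηmin⟩, hne⟩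
    exact ⟨ν, hν, η, hη, hne, hνmin, hηmin⟩

theorem tropTerm_mul_of_add_eq {a b : Fin n →₀ ℕ} (hab : a + b = ν) :
    v (f.coeff a * h.coeff b) + ((∑ i, y i * (ν i : ℝ) : ℝ) : WithTop ℝ) =
      tropTerm v f y a + tropTerm v h y b := by
  subst hab
  simp only [tropTerm, v.map_mul, Finsupp.add_apply, Nat.cast_add, mul_add,
    Finset.sum_add_distrib, WithTop.coe_add]
  abel

theorem trop_add_trop_le_tropTerm_mul (ν : Fin n →₀ ℕ) :
    trop v f y + trop v h y ≤ tropTerm v (f * h) y ν := by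
  rw [tropTerm, coeff_mul]
  refine v.le_map_sum_add_coe _ fun x hx => ?_
  rw [tropTerm_mul_of_add_eq (mem_antidiagonal.mp hx)]
  exact add_le_add (trop_le_tropTerm _) (trop_le_tropTerm _)

theorem tropTerm_mul_eq_of_unique {a b : Fin n →₀ ℕ} (ha : a ∈ tropArgmin v f y)
    (hb : b ∈ tropArgmin v h y)
    (huniq : ∀ a' ∈ tropArgmin v f y, ∀ b' ∈ tropArgmin v h y, a' + b' = a + b →
      a' = a ∧ b' = b) :
    tropTerm v (f * h) y (a + b) = trop v f y + trop v h y := by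
  obtain ⟨haf, hamin⟩ := mem_tropArgmin.mp ha
  obtain ⟨hbh, hbmin⟩ := mem_tropArgmin.mp hb
  have hf : trop v f y ≠ ⊤ := hamin ▸ tropTerm_ne_top haf
  have hh : trop v h y ≠ ⊤ := hbmin ▸ tropTerm_ne_top hbh
  have hdominant : ∀ x ∈ antidiagonal (a + b) \ {(a, b)},
      v (f.coeff a * h.coeff b) < v (f.coeff x.1 * h.coeff x.2) := by
    intro x hx
    obtain ⟨hxsum, hxne⟩ : x.1 + x.2 = a + b ∧ x ≠ (a, b) := by simpa using hx
    rw [← WithTop.add_lt_add_iff_right WithTop.coe_ne_top, tropTerm_mul_of_add_eq rfl,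
      tropTerm_mul_of_add_eq hxsum, hamin, hbmin]
    by_cases hx₁ : x.1 ∈ tropArgmin v f y
    · have hx₂ : x.2 ∉ tropArgmin v h y := fun hx₂ =>
        hxne (Prod.ext_iff.mpr (huniq _ hx₁ _ hx₂ hxsum))
      exact WithTop.add_lt_add_of_le_of_lt hf (trop_le_tropTerm _)
        (trop_lt_tropTerm_of_notMem hh hx₂)
    · exact WithTop.add_lt_add_of_lt_of_le hh (trop_lt_tropTerm_of_notMem hf hx₁)
        (trop_le_tropTerm _)
  have hab : (a, b) ∈ antidiagonal (a + b) := mem_antidiagonal.mpr rfl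
  rw [tropTerm, coeff_mul, v.map_sum_eq_of_lt (F := fun x => f.coeff x.1 * h.coeff x.2) hab
    hdominant, tropTerm_mul_of_add_eq rfl, hamin, hbmin]

theorem tropTerm_mul_eq_of_lex_min {a b : Fin n →₀ ℕ} (ha : a ∈ tropArgmin v f y)
    (hb : b ∈ tropArgmin v h y) (ha_min : ∀ a' ∈ tropArgmin v f y, toLex a ≤ toLex a')
    (hb_min : ∀ b' ∈ tropArgmin v h y, toLex b ≤ toLex b') :
    tropTerm v (f * h) y (a + b) = trop v f y + trop v h y :=
  tropTerm_mul_eq_of_unique ha hb fun a' ha' b' hb' hsum => by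
    obtain ⟨rfl, rfl⟩ := (add_eq_add_iff_eq_and_eq (ha_min a' ha') (hb_min b' hb')).mp
      (congrArg toLex hsum.symm)
    exact ⟨rfl, rfl⟩

theorem tropTerm_mul_eq_of_lex_max {a b : Fin n →₀ ℕ} (ha : a ∈ tropArgmin v f y)
    (hb : b ∈ tropArgmin v h y) (ha_max : ∀ a' ∈ tropArgmin v f y, toLex a' ≤ toLex a)
    (hb_max : ∀ b' ∈ tropArgmin v h y, toLex b' ≤ toLex b) :
    tropTerm v (f * h) y (a + b) = trop v f y + trop v h y :=
  tropTerm_mul_eq_of_unique ha hb fun a' ha' b' hb' hsum =>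
    (add_eq_add_iff_eq_and_eq (ha_max a' ha') (hb_max b' hb')).mp (congrArg toLex hsum)

theorem trop_mul (hf : f ≠ 0) (hh : h ≠ 0) (y : Fin n → ℝ) :
    trop v (f * h) y = trop v f y + trop v h y := by
  obtain ⟨a, ha, ha_min⟩ := Finset.exists_min_image _ toLex (tropArgmin_nonempty v hf y)
  obtain ⟨b, hb, hb_min⟩ := Finset.exists_min_image _ toLex (tropArgmin_nonempty v hh y)
  refine le_antisymm ?_ (Finset.le_inf fun ν _ => trop_add_trop_le_tropTerm_mul ν)
  exact (trop_le_tropTerm (a + b)).trans_eq (tropTerm_mul_eq_of_lex_min ha hb ha_min hb_min)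

theorem tropSet_subset_tropSet_mul (hf : f ≠ 0) (hh : h ≠ 0) :
    tropSet v f ⊆ tropSet v (f * h) := by
  intro y hy
  obtain ⟨ν, hν, η, hη, hνη⟩ := mem_tropSet_iff.mp hy
  obtain ⟨a, ha, ha_min⟩ := Finset.exists_min_image _ toLex (tropArgmin_nonempty v hf y)
  obtain ⟨A, hA, hA_max⟩ := Finset.exists_max_image _ toLex (tropArgmin_nonempty v hf y)
  obtain ⟨b, hb, hb_min⟩ := Finset.exists_min_image _ toLex (tropArgmin_nonempty v hh y)
  obtain ⟨B, hB, hB_max⟩ := Finset.exists_max_image _ toLex (tropArgmin_nonempty v hh y)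
  have haA : toLex a < toLex A := by
    refine (ha_min A hA).lt_of_ne fun haA => hνη (toLex.injective (le_antisymm ?_ ?_))
    · exact (hA_max ν hν).trans (haA.symm.trans_le (ha_min η hη))
    · exact (hA_max η hη).trans (haA.symm.trans_le (ha_min ν hν))
  have hne : a + b ≠ A + B := fun hsum =>
    (add_lt_add_of_lt_of_le haA (hb_min B hB)).ne (congrArg toLex hsum)
  have hfin : trop v (f * h) y ≠ ⊤ := trop_ne_top (mul_ne_zero hf hh)
  refine mem_tropSet_iff.mpr ⟨a + b, ?_, A + B, ?_, hne⟩ <;>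
    refine mem_tropArgmin_of_tropTerm_eq hfin (Eq.trans ?_ (trop_mul hf hh y).symm)
  · exact tropTerm_mul_eq_of_lex_min ha hb ha_min hb_min
  · exact tropTerm_mul_eq_of_lex_max hA hB hA_max hB_max

end Tropicalization

/-- For `g = f·h` over a valued field, `trop(g) = trop(f) + trop(h)`, and consequently
`Trop(f) ⊆ Trop(g)`. -/
theorem stmt4 {K : Type*} [Field K] {n : ℕ}
    (v : AddValuation K (WithTop ℝ)) (f h : MvPolynomial (Fin n) K)
    (hf : f ≠ 0) (hh : h ≠ 0) :
    (∀ y, trop v (f * h) y = trop v f y + trop v h y) ∧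
    tropSet v f ⊆ tropSet v (f * h) :=
  ⟨trop_mul hf hh, tropSet_subset_tropSet_mul hf hh⟩
end

section
/- Let C be a one-dimensional weighted fan in ℝⁿ with rays generated by primitive integer vectors v_1, …, v_s and positive integer weights ω_1, …, ω_s satisfying the balancing condition Σ ω_i v_i = 0. If p: ℝⁿ → ℝᵐ is a linear map with integer matrix, then the pushed-forward weighted fan, with rays p(v_i) (for those i with p(v_i) ≠ 0) and weights obtained by summing ω_i · (lattice index of p(v_i) relative to the primitive generator of its ray) over rays mapping to the same image ray, is again balanced: the weighted sum of primitive generators of image rays is 0. -/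
open scoped Classical

/-- A vector of `ℤ^k` is primitive if the gcd of its coordinates is `1`. -/
def IsPrimitiveVec {k : ℕ} (x : Fin k → ℤ) : Prop :=
  Finset.univ.gcd (fun j => (x j).natAbs) = 1

section

variable {ι R M N : Type*} [CommSemiring R] [AddCommMonoid M] [Module R M]
  [AddCommMonoid N] [Module R N]

theorem Finset.sum_image_sum_fiber_smul [DecidableEq M] (s : Finset ι) (c : ι → R)
    (w : ι → M) :
    ∑ u ∈ s.image w, (∑ i ∈ s.filter (fun i => w i = u), c i) • u = ∑ i ∈ s, c i • w i := by
  refine Finset.sum_image' _ fun u _ => ?_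
  rw [Finset.sum_smul]
  exact Finset.sum_congr rfl fun i hi => by rw [(Finset.mem_filter.1 hi).2]

theorem LinearMap.sum_filter_ne_zero_smul_factor [Fintype ι] [DecidableEq N] (p : M →ₗ[R] N)
    (v : ι → M) (ω lam : ι → R) (w : ι → N) (hw : ∀ i, p (v i) ≠ 0 → p (v i) = lam i • w i) :
    ∑ i ∈ Finset.univ.filter (fun i => p (v i) ≠ 0), (ω i * lam i) • w i
      = p (∑ i, ω i • v i) := by
  calc ∑ i ∈ Finset.univ.filter (fun i => p (v i) ≠ 0), (ω i * lam i) • w i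
      = ∑ i ∈ Finset.univ.filter (fun i => p (v i) ≠ 0), ω i • p (v i) :=
        Finset.sum_congr rfl fun i hi => by
          rw [hw i (Finset.mem_filter.1 hi).2, smul_smul]
    _ = ∑ i, ω i • p (v i) :=
        Finset.sum_filter_of_ne fun i _ hi hzero => hi (by rw [hzero, smul_zero])
    _ = p (∑ i, ω i • v i) := by simp only [map_sum, map_smul]

end

theorem stmt10_general {n m : ℕ} {ι : Type} [Fintype ι]
    (p : (Fin n → ℤ) →ₗ[ℤ] (Fin m → ℤ))
    (v : ι → Fin n → ℤ) (ω : ι → ℤ)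
    (hbal : ∑ i, ω i • v i = 0)
    (lam : ι → ℤ) (w : ι → Fin m → ℤ)
    (hw : ∀ i, p (v i) ≠ 0 → 0 < lam i ∧ IsPrimitiveVec (w i) ∧ p (v i) = lam i • w i) :
    ∑ u ∈ (Finset.univ.filter fun i => p (v i) ≠ 0).image w,
      (∑ i ∈ Finset.univ.filter (fun i => p (v i) ≠ 0 ∧ w i = u), ω i * lam i) • u
      = (0 : Fin m → ℤ) := by
  simp_rw [← Finset.filter_filter]
  rw [Finset.sum_image_sum_fiber_smul,
    p.sum_filter_ne_zero_smul_factor v ω lam w fun i hi => (hw i hi).2.2, hbal, map_zero]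

/-- Push-forward of a balanced weighted one-dimensional fan along an integer linear map
is balanced: if `∑ ωᵢ vᵢ = 0` with `vᵢ` primitive and `ωᵢ > 0`, and for each `i` with
`p(vᵢ) ≠ 0` we write `p(vᵢ) = λᵢ wᵢ` with `wᵢ` primitive and `λᵢ > 0`, then the weighted
sum over the distinct image primitive generators `u`, with weight `∑_{i : wᵢ = u} ωᵢ λᵢ`,
is zero. -/
theorem stmt10 {n m : ℕ} {ι : Type} [Fintype ι]
    (p : (Fin n → ℤ) →ₗ[ℤ] (Fin m → ℤ))
    (v : ι → Fin n → ℤ) (ω : ι → ℤ) (hω : ∀ i, 0 < ω i)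
    (hvprim : ∀ i, IsPrimitiveVec (v i))
    (hbal : ∑ i, ω i • v i = 0)
    (lam : ι → ℤ) (w : ι → Fin m → ℤ)
    (hw : ∀ i, p (v i) ≠ 0 → 0 < lam i ∧ IsPrimitiveVec (w i) ∧ p (v i) = lam i • w i) :
    ∑ u ∈ (Finset.univ.filter fun i => p (v i) ≠ 0).image w,
      (∑ i ∈ Finset.univ.filter (fun i => p (v i) ≠ 0 ∧ w i = u), ω i * lam i) • u
      = (0 : Fin m → ℤ) :=
  stmt10_general p v ω hbal lam w hw
end

section
/- For integers d ≥ 1 and indices with k + n ≤ d, l ≤ n+1, m ≤ k+1, the linear combination S = Σ_{i=k}^{d-n} Σ_{j=0}^{d-i} (-1)^{i-k+l-1-j} C(i-m, i-k) C(d-i-n+l-1-j, d-i-n) b_{(i,j)}, where b_{(i,j)} = Σ_{s=0}^{i} Σ_{t=0}^{d-i-j} (-1)^{d-t-s} C(d-t-s, i-s) C(d-i-t, j) a_{(d-t-s,s)}, when expanded as a linear combination of the variables a_{(d-t-s,s)}, has coefficient of a_{(d-t-s,s)} equal to zero whenever n ≤ t ≤ d-k and m ≤ s < d-t-k+m. 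-/
/-!
For fixed `i` the sum over `j` is `∑ⱼ (-1)ʲ C(D, j) C(b - j, c)` with `D = d - i - t ≤ c = d - i - n`:
a `D`-th forward difference of `x ↦ C(x, c)`, hence equal to `C(t - n + l - 1, t - n)`, independently
of `i`. By upper negation `(-1)ʳ C(r + k - m, r) = C(m - k - 1, r)` the remaining sum over `i` is a
Chu–Vandermonde convolution, equal to `C(d - t - s + m - k - 1, d - t - k)`; this vanishes because
`0 ≤ d - t - s + m - k - 1 < d - t - k`.
-/

open Finset fwdDiff

namespace Ring

variable {R : Type*} [CommRing R] [BinomialRing R]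

lemma fwdDiff_choose (j : ℕ) :
    Δ_[1] (fun x : R ↦ choose x (j + 1)) = fun x ↦ choose x j := by
  ext x
  simp only [fwdDiff, choose_succ_succ, add_sub_cancel_right]

lemma fwdDiff_iter_choose (j k : ℕ) :
    (Δ_[1])^[k] (fun x : R ↦ choose x (k + j)) = fun x ↦ choose x j := by
  induction k generalizing j with
  | zero => simp
  | succ k ih =>
    simp only [Function.iterate_succ_apply', add_assoc, add_comm 1 j, ih, fwdDiff_choose]

lemma sum_range_neg_one_pow_mul_choose_mul_choose_sub (b : R) {a c : ℕ} (hac : a ≤ c) :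
    ∑ j ∈ range (a + 1), (-1) ^ j * (a.choose j : R) * choose (b - j) c =
      choose (b - a) (c - a) := by
  have h := congr_fun (fwdDiff_iter_choose (c - a) a) (b - a)
  rw [Nat.add_sub_cancel' hac, fwdDiff_iter_eq_sum_shift] at h
  rw [← h, ← sum_range_reflect]
  refine sum_congr rfl fun j hj => ?_
  have hja : j ≤ a := Nat.lt_succ_iff.mp (mem_range.mp hj)
  rw [Nat.add_sub_cancel, Nat.choose_symm hja, Nat.cast_sub hja, zsmul_eq_mul, nsmul_one]
  push_cast
  ring_nf

lemma neg_one_pow_mul_choose_eq_choose_neg (x : R) (r : ℕ) :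
    (-1) ^ r * choose (x + r - 1) r = choose (-x) r := by
  rw [choose_neg, Units.smul_def, Int.coe_negOnePow_natCast, zsmul_eq_mul]
  push_cast
  rfl

lemma sum_Icc_ite_neg_one_pow_mul_choose_mul_choose_eq_zero {k m s N : ℕ}
    (hm : m ≤ k + 1) (hms : m ≤ s) (hk : k < N + m) :
    ∑ i ∈ Icc k (s + N), (if s ≤ i then
      (-1) ^ (i - k) * choose ((i : R) - m) (i - k) * (N.choose (i - s) : R) else 0) = 0 := by
  have hterm : ∀ r ∈ range (s + N - k + 1), (if s ≤ k + r then
      (-1) ^ (k + r - k) * choose (((k + r : ℕ) : R) - m) (k + r - k) *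
        (N.choose (k + r - s) : R) else 0) =
      choose (-((k + 1 - m : ℕ) : R)) r * (N.choose (s + N - k - r) : R) := by
    intro r hr
    have hrA : r ≤ s + N - k := Nat.lt_succ_iff.mp (mem_range.mp hr)
    split_ifs with hs
    · rw [Nat.add_sub_cancel_left, ← neg_one_pow_mul_choose_eq_choose_neg,
        Nat.choose_symm_of_eq_add (show N = k + r - s + (s + N - k - r) by omega)]
      push_cast [Nat.cast_sub hm]
      ring_nf
    · rw [Nat.choose_eq_zero_of_lt (by omega), Nat.cast_zero, mul_zero]
  have hvanish : choose (-((k + 1 - m : ℕ) : R) + N) (s + N - k) = 0 := by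
    rw [show -((k + 1 - m : ℕ) : R) + N = ((N + m - (k + 1) : ℕ) : R) by
        push_cast [Nat.cast_sub hm, Nat.cast_sub (show k + 1 ≤ N + m by omega)]; ring,
      choose_natCast, Nat.choose_eq_zero_of_lt (by omega), Nat.cast_zero]
  rw [← Ico_add_one_right_eq_Icc, sum_Ico_eq_sum_range,
    show s + N + 1 - k = s + N - k + 1 by omega, sum_congr rfl hterm, ← hvanish,
    add_choose_eq _ (Commute.all _ _), Nat.sum_antidiagonal_eq_sum_range_succ_mk]
  simp only [choose_natCast]

end Ring

lemma neg_one_zpow_sub_natCast {α : Type*} [DivisionRing α] (z : ℤ) (j : ℕ) :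
    (-1 : α) ^ (z - j) = (-1) ^ z * (-1) ^ j := by
  rw [zpow_sub₀ (neg_ne_zero.2 one_ne_zero), zpow_natCast, div_eq_mul_inv, ← inv_pow, inv_neg_one]

lemma sum_range_coeff_eq_mul_ite {d k n l m t s i : ℕ} (hnt : n ≤ t) (hki : k ≤ i) :
    ∑ j ∈ range (d - i + 1),
      (if s ≤ i ∧ i + t + j ≤ d then
        (-1 : ℚ) ^ ((i : ℤ) - k + l - 1 - j) *
          (Ring.choose ((i : ℤ) - m) (i - k) : ℚ) *
          (Ring.choose ((d : ℤ) - i - n + l - 1 - j) (d - i - n) : ℚ) *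
          (-1 : ℚ) ^ ((d : ℤ) - t - s) *
          (Ring.choose ((d : ℤ) - t - s) (i - s) : ℚ) *
          (Ring.choose ((d : ℤ) - i - t) j : ℚ)
      else 0) =
    (-1 : ℚ) ^ ((l : ℤ) - 1) * (-1 : ℚ) ^ ((d : ℤ) - t - s) *
        Ring.choose ((t : ℚ) - n + l - 1) (t - n) *
      (if s ≤ i ∧ i + t ≤ d then
        (-1) ^ (i - k) * Ring.choose ((i : ℚ) - m) (i - k) * ((d - t - s).choose (i - s) : ℚ)
      else 0) := by
  split_ifs with hsi
  swap
  · rw [mul_zero]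
    exact sum_eq_zero fun j _ ↦ if_neg fun h ↦ hsi ⟨h.1, by omega⟩
  obtain ⟨hsi, hitd⟩ := hsi
  have hrange : (range (d - i + 1)).filter (fun j ↦ s ≤ i ∧ i + t + j ≤ d) =
      range (d - i - t + 1) := by
    ext j
    simp only [mem_filter, mem_range]
    omega
  have hsign : (-1 : ℚ) ^ ((i : ℤ) - k + l - 1) = (-1) ^ (i - k) * (-1) ^ ((l : ℤ) - 1) := by
    rw [show (i : ℤ) - k + l - 1 = ((i - k : ℕ) : ℤ) + ((l : ℤ) - 1) by omega,
      zpow_add₀ (neg_ne_zero.2 one_ne_zero), zpow_natCast]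
  have hterm : ∀ j ∈ range (d - i - t + 1),
      (-1 : ℚ) ^ ((i : ℤ) - k + l - 1 - j) *
          (Ring.choose ((i : ℤ) - m) (i - k) : ℚ) *
          (Ring.choose ((d : ℤ) - i - n + l - 1 - j) (d - i - n) : ℚ) *
          (-1 : ℚ) ^ ((d : ℤ) - t - s) *
          (Ring.choose ((d : ℤ) - t - s) (i - s) : ℚ) *
          (Ring.choose ((d : ℤ) - i - t) j : ℚ) =
        (-1 : ℚ) ^ ((i : ℤ) - k + l - 1) * Ring.choose ((i : ℚ) - m) (i - k) *
            (-1 : ℚ) ^ ((d : ℤ) - t - s) * ((d - t - s).choose (i - s) : ℚ) *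
          ((-1) ^ j * ((d - i - t).choose j : ℚ) *
            Ring.choose ((d : ℚ) - i - n + l - 1 - j) (d - i - n)) := by
    intro j _
    have hN : ((d - t - s : ℕ) : ℚ) = d - t - s := by
      rw [Nat.cast_sub (by omega), Nat.cast_sub (by omega)]
    have hD : ((d - i - t : ℕ) : ℚ) = d - i - t := by
      rw [Nat.cast_sub (by omega), Nat.cast_sub (by omega)]
    rw [neg_one_zpow_sub_natCast, ← Ring.choose_natCast, ← Ring.choose_natCast, hN, hD]
    simp only [Int.cast_natCast]
    ring
  rw [← sum_filter, hrange, sum_congr rfl hterm, ← mul_sum,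
    Ring.sum_range_neg_one_pow_mul_choose_mul_choose_sub _ (by omega), hsign,
    show d - i - n - (d - i - t) = t - n by omega,
    show (d : ℚ) - i - n + l - 1 - ((d - i - t : ℕ) : ℚ) = t - n + l - 1 by
      rw [Nat.cast_sub (by omega), Nat.cast_sub (by omega)]; ring]
  ring

/-- The inner `if` picks out exactly the occurrences of `a_{(d-t'-s',s')}` in `b_{(i,j)}` with
`s' = s`, `t' = t`. -/
theorem stmt11_general (d k n l m t s : ℕ)
    (hm : m ≤ k + 1)
    (htlow : n ≤ t)
    (hslow : m ≤ s) (hshigh : s + t + k < d + m) :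
    ∑ i ∈ Finset.Icc k (d - n), ∑ j ∈ Finset.range (d - i + 1),
      (if s ≤ i ∧ i + t + j ≤ d then
        (-1 : ℚ) ^ ((i : ℤ) - k + l - 1 - j) *
          (Ring.choose ((i : ℤ) - m) (i - k) : ℚ) *
          (Ring.choose ((d : ℤ) - i - n + l - 1 - j) (d - i - n) : ℚ) *
          (-1 : ℚ) ^ ((d : ℤ) - t - s) *
          (Ring.choose ((d : ℤ) - t - s) (i - s) : ℚ) *
          (Ring.choose ((d : ℤ) - i - t) j : ℚ)
      else 0) = 0 := by
  have hsupport : (Icc k (d - n)).filter (fun i ↦ s ≤ i ∧ i + t ≤ d) =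
      (Icc k (s + (d - t - s))).filter (s ≤ ·) := by
    ext i
    simp only [mem_filter, mem_Icc]
    omega
  rw [sum_congr rfl fun i hi ↦ sum_range_coeff_eq_mul_ite htlow (mem_Icc.1 hi).1, ← mul_sum,
    ← sum_filter, hsupport, sum_filter,
    Ring.sum_Icc_ite_neg_one_pow_mul_choose_mul_choose_eq_zero hm hslow (by omega), mul_zero]

/-- Core computation of Lemma 4.5: in the linear combination
`S = ∑_{i=k}^{d-n} ∑_{j=0}^{d-i} (-1)^{i-k+l-1-j} C(i-m,i-k) C(d-i-n+l-1-j,d-i-n) b_{(i,j)}`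
with `b_{(i,j)} = ∑_{s'=0}^{i} ∑_{t'=0}^{d-i-j} (-1)^{d-t'-s'} C(d-t'-s',i-s') C(d-i-t',j)
a_{(d-t'-s',s')}`, the coefficient of the variable `a_{(d-t-s,s)}` vanishes whenever
`n ≤ t ≤ d-k` and `m ≤ s < d-t-k+m`. The inner `if` picks out exactly the occurrences of
`a_{(d-t-s,s)}` (i.e. `s' = s`, `t' = t`). -/
theorem stmt11 (d k n l m t s : ℕ)
    (hkn : k + n ≤ d) (hl : l ≤ n + 1) (hm : m ≤ k + 1)
    (htlow : n ≤ t) (hthigh : t ≤ d - k)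
    (hslow : m ≤ s) (hshigh : s + t + k < d + m) :
    ∑ i ∈ Finset.Icc k (d - n), ∑ j ∈ Finset.range (d - i + 1),
      (if s ≤ i ∧ i + t + j ≤ d then
        (-1 : ℚ) ^ ((i : ℤ) - k + l - 1 - j) *
          (Ring.choose ((i : ℤ) - m) (i - k) : ℚ) *
          (Ring.choose ((d : ℤ) - i - n + l - 1 - j) (d - i - n) : ℚ) *
          (-1 : ℚ) ^ ((d : ℤ) - t - s) *
          (Ring.choose ((d : ℤ) - t - s) (i - s) : ℚ) *
          (Ring.choose ((d : ℤ) - i - t) j : ℚ)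
      else 0) = 0 :=
  stmt11_general d k n l m t s hm htlow hslow hshigh
end
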